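/- arXiv:1602.04915 — 3 statements merged into one kernel-verified Lean document; each statement's English description precedes it below -/
import Mathlib

section
/- Let f : ℝ^d → ℝ be twice continuously differentiable with L-Lipschitz gradient, let 0 < α < 1/L, and let g(x) = x − α∇f(x). Suppose every critical point of f is either a local minimizer or a strict saddle, and that the set of strict saddle points is at most countable. Then the set {x₀ : the iterates g^k(x₀) converge to some limit x̄ and x̄ is not a local minimizer of f} has Lebesgue measure zero. In particular, for almost every initial point from which the gradient iterates converge, the limit is a local minimizer. -/
/-!
A convergent gradient-descent orbit converges to a fixed point of `g`, i.e. to a critical point;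
if that point is not a local minimizer it is a strict saddle `p`, and as there are countably many,
it suffices that the basin `{x | g^[k] x → p}` of each is null.

Near `p`, `g` is close to its derivative `A = I - α ∇²f(p)`. Since `∇²f(p)` is symmetric with a
negative eigenvalue and `α ‖∇²f(p)‖ < 1`, the eigenvectors of `A` split the space into a part that
`A` expands at some rate `a > 1` and a part that `A` does not expand. By a cone argument, the
points whose orbits stay in a small ball around `p` form a Lipschitz graph over the non-expanded
part, hence a null set. The basin is the union of the preimages of this set under the iterates
`g^[N]`, which are null because `g` is anti-Lipschitz when `α L < 1`.
-/

open MeasureTheory Filter Function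
open scoped NNReal RealInnerProductSpace

theorem AntilipschitzWith.iterate {α : Type*} [EMetricSpace α] {K : ℝ≥0} {F : α → α}
    (hF : AntilipschitzWith K F) (n : ℕ) : AntilipschitzWith (K ^ n) F^[n] := by
  induction n with
  | zero => simpa using AntilipschitzWith.id
  | succ n ih =>
    rw [iterate_succ', pow_succ]
    exact hF.comp ih

theorem LipschitzWith.antilipschitzWith_id_sub_smul {E : Type*} [NormedAddCommGroup E]
    [NormedSpace ℝ E] {K : ℝ≥0} {F : E → E}
    (hF : LipschitzWith K F) {α : ℝ} (hαK : ‖α‖₊ * K < 1) :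
    AntilipschitzWith (1 - ‖α‖₊ * K)⁻¹ fun x ↦ x - α • F x := by
  simpa [sub_eq_add_neg] using
    AntilipschitzWith.id.add_lipschitzWith ((lipschitzWith_smul (-α)).comp hF) (by simpa using hαK)

section AddHaar

variable {E : Type*} [NormedAddCommGroup E] [NormedSpace ℝ E] [FiniteDimensional ℝ E]
  [MeasurableSpace E] [BorelSpace E] (μ : Measure E) [μ.IsAddHaarMeasure]

theorem addHaar_eq_zero_iff_hausdorffMeasure_eq_zero {s : Set E} :
    μ s = 0 ↔ μH[Module.finrank ℝ E] s = 0 :=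
  ⟨fun h ↦ Measure.absolutelyContinuous_isAddHaarMeasure _ μ h,
    fun h ↦ Measure.absolutelyContinuous_isAddHaarMeasure μ _ h⟩

theorem LipschitzOnWith.addHaar_image_eq_zero {K : ℝ≥0} {F : E → E} {s : Set E}
    (hF : LipschitzOnWith K F s) (hs : μ s = 0) : μ (F '' s) = 0 := by
  rw [addHaar_eq_zero_iff_hausdorffMeasure_eq_zero] at hs ⊢
  refine le_antisymm ?_ zero_le
  simpa [hs] using hF.hausdorffMeasure_image_le (d := Module.finrank ℝ E) (by positivity)

theorem AntilipschitzWith.addHaar_preimage_eq_zero {K : ℝ≥0} {F : E → E} {s : Set E}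
    (hF : AntilipschitzWith K F) (hs : μ s = 0) : μ (F ⁻¹' s) = 0 := by
  rw [addHaar_eq_zero_iff_hausdorffMeasure_eq_zero] at hs ⊢
  refine le_antisymm ?_ zero_le
  simpa [hs] using hF.hausdorffMeasure_preimage_le (d := Module.finrank ℝ E) (by positivity) s

/-- `s` is a Lipschitz image of a subset of the proper subspace `range Q`. -/
theorem addHaar_eq_zero_of_norm_sub_le_of_range_ne_top {Q : E →ₗ[ℝ] E}
    (hQ : LinearMap.range Q ≠ ⊤) {C : ℝ≥0} {s : Set E}
    (hs : ∀ x ∈ s, ∀ y ∈ s, ‖x - y‖ ≤ C * ‖Q (x - y)‖) : μ s = 0 := by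
  have hinj : s.InjOn Q := fun x hx y hy hxy ↦ by
    simpa [sub_eq_zero, hxy] using hs x hx y hy
  have hinv : LipschitzOnWith C (invFunOn Q s) (Q '' s) := by
    refine LipschitzOnWith.of_dist_le_mul ?_
    rintro _ ⟨x, hx, rfl⟩ _ ⟨y, hy, rfl⟩
    rw [hinj.leftInvOn_invFunOn hx, hinj.leftInvOn_invFunOn hy, dist_eq_norm, dist_eq_norm,
      ← map_sub]
    exact hs x hx y hy
  have himage : μ (Q '' s) = 0 :=
    measure_mono_null (Set.image_subset_range _ _) (Measure.addHaar_submodule μ _ hQ)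
  rw [← hinj.invFunOn_image subset_rfl]
  exact hinv.addHaar_image_eq_zero μ himage

end AddHaar

section Splitting

variable {E : Type*} [NormedAddCommGroup E] [NormedSpace ℝ E]

/-- Models the orthogonal projections `P`, `Q` onto the unstable and the center-stable subspace
of `A`. -/
structure IsExpandingSplitting (A P Q : E →L[ℝ] E) (a : ℝ) : Prop where
  norm_le_add : ∀ z, ‖z‖ ≤ ‖P z‖ + ‖Q z‖
  norm_P_le : ∀ z, ‖P z‖ ≤ ‖z‖
  norm_Q_le : ∀ z, ‖Q z‖ ≤ ‖z‖
  le_norm_P_apply : ∀ z, a * ‖P z‖ ≤ ‖P (A z)‖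
  norm_Q_apply_le : ∀ z, ‖Q (A z)‖ ≤ ‖Q z‖

namespace IsExpandingSplitting

variable {A P Q : E →L[ℝ] E} {a η : ℝ}

theorem cone_step (h : IsExpandingSplitting A P Q a) (hη : 0 ≤ η) (hgap : 1 + 4 * η ≤ a)
    {z R : E} (hz : ‖Q z‖ ≤ ‖P z‖) (hR : ‖R‖ ≤ η * ‖z‖) :
    (a - 2 * η) * ‖P z‖ ≤ ‖P (A z + R)‖ ∧ ‖Q (A z + R)‖ ≤ ‖P (A z + R)‖ := by
  have hR' : ‖R‖ ≤ 2 * η * ‖P z‖ := by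
    nlinarith [h.norm_le_add z]
  have hP : (a - 2 * η) * ‖P z‖ ≤ ‖P (A z + R)‖ := by
    calc (a - 2 * η) * ‖P z‖ ≤ ‖P (A z)‖ - ‖P R‖ := by
          nlinarith [h.le_norm_P_apply z, h.norm_P_le R]
      _ ≤ ‖P (A z + R)‖ := by
          rw [map_add]
          exact norm_sub_le_norm_add _ _
  refine ⟨hP, ?_⟩
  calc ‖Q (A z + R)‖ ≤ ‖Q (A z)‖ + ‖Q R‖ := by rw [map_add]; exact norm_add_le _ _
    _ ≤ ‖P z‖ + 2 * η * ‖P z‖ := add_le_add (h.norm_Q_apply_le z |>.trans hz)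
          (h.norm_Q_le R |>.trans hR')
    _ ≤ (a - 2 * η) * ‖P z‖ := by nlinarith [norm_nonneg (P z)]
    _ ≤ ‖P (A z + R)‖ := hP

/-- Otherwise the difference of the two orbits stays in the unstable cone `‖Q z‖ ≤ ‖P z‖`, where
its `P`-component grows geometrically, contradicting the boundedness of `U`. -/
theorem norm_P_sub_le_norm_Q_sub (h : IsExpandingSplitting A P Q a) {T : E → E} {U : Set E}
    {η : ℝ≥0} (hT : ApproximatesLinearOn T A U η) (hU : Bornology.IsBounded U) (hη : 0 < η)
    (hgap : 1 + 4 * η ≤ a) {x y : E} (hx : ∀ k, T^[k] x ∈ U) (hy : ∀ k, T^[k] y ∈ U) :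
    ‖P (x - y)‖ ≤ ‖Q (x - y)‖ := by
  by_contra! hcone
  set z : ℕ → E := fun k ↦ T^[k] x - T^[k] y
  have hgrowth : ∀ k, ‖Q (z k)‖ ≤ ‖P (z k)‖ ∧ (a - 2 * η) ^ k * ‖P (z 0)‖ ≤ ‖P (z k)‖ := by
    intro k
    induction k with
    | zero => simpa [z] using hcone.le
    | succ k ih =>
      have hz : z (k + 1) = A (z k) + (T (T^[k] x) - T (T^[k] y) - A (z k)) := by
        simp only [z, iterate_succ_apply']
        abel
      obtain ⟨hgrow, hmem⟩ := h.cone_step η.2 hgap ih.1 (hT _ (hx k) _ (hy k))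
      rw [← hz] at hgrow hmem
      refine ⟨hmem, ?_⟩
      rw [pow_succ, mul_comm _ (a - 2 * η), mul_assoc]
      exact (mul_le_mul_of_nonneg_left ih.2 (by linarith [η.2])).trans hgrow
  obtain ⟨C, hC⟩ := Metric.isBounded_iff.mp hU
  have hpos : 0 < ‖P (z 0)‖ := (norm_nonneg _).trans_lt (by simpa [z] using hcone)
  obtain ⟨k, hk⟩ := pow_unbounded_of_one_lt (C / ‖P (z 0)‖) (by linarith : 1 < a - 2 * η)
  rw [div_lt_iff₀ hpos] at hk
  have hbound : ‖P (z k)‖ ≤ C :=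
    (h.norm_P_le (z k)).trans (by simpa [z, dist_eq_norm] using hC (hx k) (hy k))
  linarith [(hgrowth k).2]

theorem addHaar_setOf_forall_iterate_mem_eq_zero [FiniteDimensional ℝ E] [MeasurableSpace E]
    [BorelSpace E] (μ : Measure E) [μ.IsAddHaarMeasure] (h : IsExpandingSplitting A P Q a)
    (hQ : LinearMap.range (Q : E →ₗ[ℝ] E) ≠ ⊤) {T : E → E} {U : Set E} {η : ℝ≥0}
    (hT : ApproximatesLinearOn T A U η) (hU : Bornology.IsBounded U) (hη : 0 < η)
    (hgap : 1 + 4 * η ≤ a) : μ {x | ∀ k, T^[k] x ∈ U} = 0 :=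
  addHaar_eq_zero_of_norm_sub_le_of_range_ne_top μ hQ (C := 2) fun x hx y hy ↦ by
    have := h.norm_P_sub_le_norm_Q_sub hT hU hη hgap hx hy
    push_cast
    linarith [h.norm_le_add (x - y)]

theorem addHaar_setOf_tendsto_iterate_eq_zero [FiniteDimensional ℝ E] [MeasurableSpace E]
    [BorelSpace E] (μ : Measure E) [μ.IsAddHaarMeasure] (h : IsExpandingSplitting A P Q a)
    (ha : 1 < a) (hQ : LinearMap.range (Q : E →ₗ[ℝ] E) ≠ ⊤) {T : E → E} {K : ℝ≥0}
    (hanti : AntilipschitzWith K T) {p : E} (hTp : HasStrictFDerivAt T A p) :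
    μ {x | Tendsto (fun k ↦ T^[k] x) atTop (nhds p)} = 0 := by
  set η : ℝ≥0 := ⟨(a - 1) / 4, by linarith⟩
  have hη : 0 < η := show (0 : ℝ) < (a - 1) / 4 by linarith
  obtain ⟨s, hs, hTs⟩ := hTp.approximates_deriv_on_nhds (Or.inr hη)
  set U := s ∩ Metric.ball p 1
  have hstable : μ {x | ∀ k, T^[k] x ∈ U} = 0 :=
    h.addHaar_setOf_forall_iterate_mem_eq_zero μ hQ (hTs.mono_set Set.inter_subset_left)
      (Metric.isBounded_ball.subset Set.inter_subset_right) hη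
      (show 1 + 4 * ((a - 1) / 4) ≤ a by linarith)
  have hbasin : {x | Tendsto (fun k ↦ T^[k] x) atTop (nhds p)} ⊆
      ⋃ N, (T^[N]) ⁻¹' {x | ∀ k, T^[k] x ∈ U} := by
    intro x hx
    obtain ⟨N, hN⟩ := eventually_atTop.mp (hx (inter_mem hs (Metric.ball_mem_nhds p one_pos)))
    refine Set.mem_iUnion.mpr ⟨N, fun k ↦ ?_⟩
    rw [← iterate_add_apply]
    exact hN (k + N) (Nat.le_add_left N k)
  exact measure_mono_null hbasin <| measure_iUnion_null fun N ↦
    (hanti.iterate N).addHaar_preimage_eq_zero μ hstable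

end IsExpandingSplitting

end Splitting

namespace OrthonormalBasis

variable {ι E : Type*} [Fintype ι] [NormedAddCommGroup E] [InnerProductSpace ℝ E]
  (b : OrthonormalBasis ι ℝ E)

noncomputable def projOn (s : Finset ι) : E →L[ℝ] E :=
  ∑ i ∈ s, (innerSL ℝ (b i)).smulRight (b i)

theorem projOn_apply (s : Finset ι) (z : E) : b.projOn s z = ∑ i ∈ s, ⟪b i, z⟫ • b i := by
  simp [projOn]

theorem inner_projOn [DecidableEq ι] (s : Finset ι) (j : ι) (z : E) :
    ⟪b j, b.projOn s z⟫ = if j ∈ s then ⟪b j, z⟫ else 0 := by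
  simp [projOn_apply, inner_sum, real_inner_smul_right, b.inner_eq_ite]

theorem norm_projOn_sq (s : Finset ι) (z : E) : ‖b.projOn s z‖ ^ 2 = ∑ i ∈ s, ⟪b i, z⟫ ^ 2 := by
  classical
  simp [← b.sum_sq_inner_right, inner_projOn, ite_pow, Finset.sum_ite_mem]

theorem norm_projOn_sq_add_norm_projOn_compl_sq [DecidableEq ι] (s : Finset ι) (z : E) :
    ‖b.projOn s z‖ ^ 2 + ‖b.projOn sᶜ z‖ ^ 2 = ‖z‖ ^ 2 := by
  rw [norm_projOn_sq, norm_projOn_sq, Finset.sum_add_sum_compl, b.sum_sq_inner_right]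

theorem range_projOn_ne_top {s : Finset ι} {i : ι} (hi : i ∉ s) :
    LinearMap.range (b.projOn s : E →ₗ[ℝ] E) ≠ ⊤ := by
  classical
  intro htop
  obtain ⟨z, hz⟩ := (LinearMap.range_eq_top.mp htop) (b i)
  have := b.inner_projOn s i z
  simp_all

theorem isExpandingSplitting_projOn [DecidableEq ι] {A : E →L[ℝ] E} {ν : ι → ℝ}
    (hA : ∀ i z, ⟪b i, A z⟫ = ν i * ⟪b i, z⟫) {s : Finset ι} {a : ℝ} (ha : 0 ≤ a)
    (hs : ∀ i ∈ s, a ≤ |ν i|) (hsc : ∀ i ∉ s, |ν i| ≤ 1) :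
    IsExpandingSplitting A (b.projOn s) (b.projOn sᶜ) a := by
  have hsplit := b.norm_projOn_sq_add_norm_projOn_compl_sq s
  have hA_sq : ∀ t z, ‖b.projOn t (A z)‖ ^ 2 = ∑ i ∈ t, ν i ^ 2 * ⟪b i, z⟫ ^ 2 := by
    intro t z
    simp [norm_projOn_sq, hA, mul_pow]
  refine ⟨fun z ↦ ?_, fun z ↦ ?_, fun z ↦ ?_, fun z ↦ ?_, fun z ↦ ?_⟩
  · nlinarith [hsplit z, norm_nonneg (b.projOn s z), norm_nonneg (b.projOn sᶜ z), norm_nonneg z]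
  · nlinarith [hsplit z, norm_nonneg (b.projOn s z), norm_nonneg z]
  · nlinarith [hsplit z, norm_nonneg (b.projOn sᶜ z), norm_nonneg z]
  · refine (sq_le_sq₀ (by positivity) (norm_nonneg _)).mp ?_
    rw [mul_pow, hA_sq, norm_projOn_sq, Finset.mul_sum]
    refine Finset.sum_le_sum fun i hi ↦ mul_le_mul_of_nonneg_right ?_ (sq_nonneg _)
    simpa [sq_abs] using pow_le_pow_left₀ ha (hs i hi) 2
  · refine (sq_le_sq₀ (norm_nonneg _) (norm_nonneg _)).mp ?_
    rw [hA_sq, norm_projOn_sq]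
    refine Finset.sum_le_sum fun i hi ↦ mul_le_of_le_one_left (sq_nonneg _) ?_
    simpa [sq_abs] using pow_le_pow_left₀ (abs_nonneg _) (hsc i (Finset.mem_compl.mp hi)) 2

end OrthonormalBasis

theorem LinearMap.IsSymmetric.exists_isExpandingSplitting_id_sub_smul {E : Type*}
    [NormedAddCommGroup E] [InnerProductSpace ℝ E] [FiniteDimensional ℝ E] {B : E →L[ℝ] E}
    (hB : (B : E →ₗ[ℝ] E).IsSymmetric) {α : ℝ} (hα : 0 < α) (hαB : α * ‖B‖ ≤ 2) {v : E}
    (hv : ⟪v, B v⟫ < 0) :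
    ∃ (P Q : E →L[ℝ] E) (a : ℝ), 1 < a ∧ LinearMap.range (Q : E →ₗ[ℝ] E) ≠ ⊤ ∧
      IsExpandingSplitting (ContinuousLinearMap.id ℝ E - α • B) P Q a := by
  classical
  obtain ⟨b, μ, hBb⟩ : ∃ (b : OrthonormalBasis (Fin (Module.finrank ℝ E)) ℝ E)
      (μ : Fin (Module.finrank ℝ E) → ℝ), ∀ i, B (b i) = μ i • b i :=
    ⟨hB.eigenvectorBasis rfl, hB.eigenvalues rfl, fun i ↦ by
      simpa only [RCLike.ofReal_real_eq_id, id_eq, ContinuousLinearMap.coe_coe] using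
        hB.apply_eigenvectorBasis rfl i⟩
  have hBb' : ∀ i z, ⟪b i, B z⟫ = μ i * ⟪b i, z⟫ := fun i z ↦ by
    have := hB (b i) z
    simp only [ContinuousLinearMap.coe_coe] at this
    rw [← this, hBb, real_inner_smul_left]
  have hμ_le : ∀ i, |μ i| ≤ ‖B‖ := fun i ↦ by
    simpa [hBb, norm_smul, b.norm_eq_one] using B.le_opNorm (b i)
  obtain ⟨i₀, hi₀⟩ : ∃ i, μ i < 0 := by
    by_contra! hμ
    have : 0 ≤ ⟪v, B v⟫ := by
      rw [← b.sum_inner_mul_inner]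
      refine Finset.sum_nonneg fun i _ ↦ ?_
      rw [hBb', real_inner_comm v]
      nlinarith [mul_nonneg (hμ i) (mul_self_nonneg ⟪v, b i⟫)]
    linarith
  set s := Finset.univ.filter fun i ↦ μ i < 0
  have hs : s.Nonempty := ⟨i₀, by simp [s, hi₀]⟩
  set a := s.inf' hs fun i ↦ 1 - α * μ i
  have ha : 1 < a := (Finset.lt_inf'_iff hs).mpr fun i hi ↦ by
    nlinarith [(Finset.mem_filter.mp hi).2]
  refine ⟨b.projOn s, b.projOn sᶜ, a, ha, b.range_projOn_ne_top (i := i₀) (by simp [s, hi₀]),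
    b.isExpandingSplitting_projOn (ν := fun i ↦ 1 - α * μ i) (fun i z ↦ ?_) (by linarith)
      (fun i hi ↦ ?_) (fun i hi ↦ ?_)⟩
  · simp [inner_sub_right, real_inner_smul_right, hBb']
    ring
  · exact (Finset.inf'_le _ hi).trans (le_abs_self _)
  · have hμi : 0 ≤ μ i := by simpa [s] using hi
    rw [abs_le]
    constructor <;> nlinarith [hμ_le i, abs_of_nonneg hμi]

section Gradient

variable {E : Type*} [NormedAddCommGroup E] [InnerProductSpace ℝ E] [CompleteSpace E] {f : E → ℝ}

theorem ContDiff.contDiff_gradient {n : WithTop ℕ∞} (hf : ContDiff ℝ (n + 1) f) :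
    ContDiff ℝ n (gradient f) :=
  (InnerProductSpace.toDual ℝ E).symm.contDiff.comp (hf.fderiv_right le_rfl)

theorem inner_fderiv_gradient_apply (x u w : E) :
    ⟪fderiv ℝ (gradient f) x u, w⟫ = fderiv ℝ (fderiv ℝ f) x u w := by
  rw [show gradient f = (InnerProductSpace.toDual ℝ E).symm ∘ fderiv ℝ f from rfl,
    LinearIsometryEquiv.comp_fderiv]
  exact InnerProductSpace.toDual_symm_apply

theorem ContDiff.isSymmetric_fderiv_gradient (hf : ContDiff ℝ 2 f) (x : E) :
    (fderiv ℝ (gradient f) x : E →ₗ[ℝ] E).IsSymmetric := fun u w ↦ by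
  simp only [ContinuousLinearMap.coe_coe]
  rw [real_inner_comm _ u, inner_fderiv_gradient_apply, inner_fderiv_gradient_apply]
  exact (hf.contDiffAt.isSymmSndFDerivAt (by simp [minSmoothness_of_isRCLikeNormedField])).eq u w

end Gradient

section GradientDescent

variable {E : Type*} [NormedAddCommGroup E] [InnerProductSpace ℝ E] [FiniteDimensional ℝ E]

theorem addHaar_setOf_tendsto_gradient_step_eq_zero [MeasurableSpace E] [BorelSpace E]
    (μ : Measure E) [μ.IsAddHaarMeasure] {f : E → ℝ} (hf : ContDiff ℝ 2 f) {K : ℝ≥0}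
    (hK : LipschitzWith K (gradient f)) {α : ℝ} (hα : 0 < α) (hαK : α * K < 1) {p v : E}
    (hv : ⟪v, fderiv ℝ (gradient f) p v⟫ < 0) :
    μ {x | Tendsto (fun k ↦ (fun y ↦ y - α • gradient f y)^[k] x) atTop (nhds p)} = 0 := by
  have hgrad : ContDiff ℝ 1 (gradient f) := hf.contDiff_gradient
  have hB : α * ‖fderiv ℝ (gradient f) p‖ ≤ 2 := by
    nlinarith [norm_fderiv_le_of_lipschitz ℝ hK (x₀ := p)]
  obtain ⟨P, Q, a, ha, hQ, hsplit⟩ :=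
    (hf.isSymmetric_fderiv_gradient p).exists_isExpandingSplitting_id_sub_smul hα hB hv
  refine hsplit.addHaar_setOf_tendsto_iterate_eq_zero μ ha hQ
    (hK.antilipschitzWith_id_sub_smul ?_) ?_
  · rw [← NNReal.coe_lt_coe]
    simpa [abs_of_pos hα] using hαK
  · exact (hasStrictFDerivAt_id p).sub
      ((hgrad.contDiffAt.hasStrictFDerivAt one_ne_zero).const_smul α)

end GradientDescent

/-- Suppose every critical point of `f` is a local minimizer or a strict saddle,
and the set of strict saddles is at most countable. Then the set of
initializations from which gradient descent (step size `0 < α < 1/L`) converges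
to a limit that is not a local minimizer has Lebesgue measure zero. -/
theorem gradient_descent_converges_to_local_minimizers
    {d : ℕ} (f : EuclideanSpace ℝ (Fin d) → ℝ) (L α : ℝ)
    (hf : ContDiff ℝ 2 f) (hL : 0 < L)
    (hlip : ∀ x y, ‖gradient f x - gradient f y‖ ≤ L * ‖x - y‖)
    (hα : 0 < α) (hαL : α < 1 / L)
    (g : EuclideanSpace ℝ (Fin d) → EuclideanSpace ℝ (Fin d))
    (hg : ∀ x, g x = x - α • gradient f x)
    (hdichotomy : ∀ x, gradient f x = 0 →
      IsLocalMin f x ∨ ∃ v, (inner ℝ v (fderiv ℝ (gradient f) x v) : ℝ) < 0)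
    (hcount : Set.Countable
      {x | gradient f x = 0 ∧ ∃ v, (inner ℝ v (fderiv ℝ (gradient f) x v) : ℝ) < 0}) :
    volume {x₀ | ∃ xbar, Tendsto (fun k => g^[k] x₀) atTop (nhds xbar) ∧
      ¬ IsLocalMin f xbar} = 0 := by
  set K : ℝ≥0 := ⟨L, hL.le⟩
  have hK : LipschitzWith K (gradient f) :=
    LipschitzWith.of_dist_le_mul fun x y ↦ by rw [dist_eq_norm, dist_eq_norm]; exact hlip x y
  have hαK : α * K < 1 := (lt_div_iff₀ hL).mp (by simpa using hαL)
  have hg' : g = fun x ↦ x - α • gradient f x := funext hg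
  have hcont : Continuous g :=
    hg' ▸ continuous_id.sub ((hf.contDiff_gradient (n := 1)).continuous.const_smul α)
  have hlimits : {x₀ | ∃ xbar, Tendsto (fun k => g^[k] x₀) atTop (nhds xbar) ∧ ¬ IsLocalMin f xbar}
      ⊆ ⋃ p ∈ {x | gradient f x = 0 ∧ ∃ v, (inner ℝ v (fderiv ℝ (gradient f) x v) : ℝ) < 0},
        {x₀ | Tendsto (fun k => g^[k] x₀) atTop (nhds p)} := by
    rintro x₀ ⟨p, hp, hmin⟩
    have hfix : g p = p := isFixedPt_of_tendsto_iterate hp hcont.continuousAt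
    have hcrit : gradient f p = 0 := by simpa [hg, hα.ne'] using hfix
    exact Set.mem_biUnion ⟨hcrit, (hdichotomy p hcrit).resolve_left hmin⟩ hp
  refine measure_mono_null hlimits ((measure_biUnion_null_iff hcount).mpr ?_)
  rintro p ⟨-, v, hv⟩
  exact hg' ▸ addHaar_setOf_tendsto_gradient_step_eq_zero volume hf hK hα hαK hv
end

section
/- Let f : ℝ^d → ℝ be differentiable, let α > 0, let x_k be gradient descent iterates x_{k+1} = x_k − α∇f(x_k) converging to a point x* with f(x*) = 0 and f(x_k) ≥ 0 for all k, and let 1/2 < a < 1 and m > 0. Suppose that for all sufficiently large k: (i) the Lojasiewicz inequality ‖∇f(x_k)‖ ≥ m f(x_k)^a holds, and (ii) the tail sums e_k := ∑_{j≥k} ‖x_{j+1} − x_j‖ are finite and satisfy e_k ≤ (2/(αm(1−a))) f(x_k)^{1−a}. Then there exists a constant C > 0, independent of k, such that ‖x_k − x*‖ ≤ C / k^{(1−a)/(2a−1)} for all k ≥ 1. -/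
/-! Write `e_k` for the length of the path `x_k, x_{k+1}, …`, so `‖x_k - x*‖ ≤ e_k` and
`e_k - e_{k+1} = ‖x_{k+1} - x_k‖ = α ‖∇f(x_k)‖`. The Lojasiewicz inequality and the tail bound
combine into the recursion `e_k - e_{k+1} ≥ c e_k^{1+β}` with `β = (2a-1)/(1-a) > 0`. Convexity
of `t ↦ t^{-β}` turns it into `e_{k+1}^{-β} ≥ e_k^{-β} + β c`, so `e_k^{-β}` grows at least
linearly and `e_k = O(k^{-1/β})`. -/

open Filter Topology

lemma le_rpow_neg_sub_rpow_neg {β X Y : ℝ} (hβ : 0 < β) (hY : 0 < Y) (hYX : Y ≤ X) :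
    β * X ^ (-β - 1) * (X - Y) ≤ Y ^ (-β) - X ^ (-β) := by
  rcases hYX.eq_or_lt with rfl | hlt
  · simp
  have hcont : ContinuousOn (fun t : ℝ => t ^ (-β)) (Set.Icc Y X) := fun t ht =>
    (Real.continuousAt_rpow_const t _ (Or.inl (hY.trans_le ht.1).ne')).continuousWithinAt
  have hderiv : ∀ t ∈ Set.Ioo Y X,
      HasDerivAt (fun t : ℝ => t ^ (-β)) (-β * t ^ (-β - 1)) t := fun t ht =>
    Real.hasDerivAt_rpow_const (Or.inl (hY.trans ht.1).ne')
  obtain ⟨ξ, hξ, hslope⟩ := exists_hasDerivAt_eq_slope _ _ hlt hcont hderiv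
  rw [eq_div_iff (sub_ne_zero.mpr hlt.ne')] at hslope
  have hξX : X ^ (-β - 1) ≤ ξ ^ (-β - 1) :=
    Real.rpow_le_rpow_of_nonpos (hY.trans hξ.1) hξ.2.le (by linarith)
  have hmul := mul_le_mul_of_nonneg_left hξX (by nlinarith : 0 ≤ β * (X - Y))
  linarith

lemma rpow_neg_add_le_rpow_neg_of_mul_rpow_le_sub {β c X Y : ℝ} (hβ : 0 < β) (hY : 0 < Y)
    (hYX : Y ≤ X) (h : c * X ^ (β + 1) ≤ X - Y) : X ^ (-β) + β * c ≤ Y ^ (-β) := by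
  have hX : 0 < X := hY.trans_le hYX
  have hcancel : X ^ (-β - 1) * X ^ (β + 1) = 1 := by
    rw [← Real.rpow_add hX]; norm_num
  have hscaled := mul_le_mul_of_nonneg_left h (mul_nonneg hβ.le (Real.rpow_nonneg hX.le (-β - 1)))
  have hβc : β * X ^ (-β - 1) * (c * X ^ (β + 1)) = β * c := by
    linear_combination β * c * hcancel
  linarith [le_rpow_neg_sub_rpow_neg hβ hY hYX]

section Recursion

variable {u : ℕ → ℝ} {β c : ℝ}

lemma antitone_of_mul_rpow_le_sub (hu : ∀ k, 0 ≤ u k) (hc : 0 ≤ c)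
    (h : ∀ k, c * u k ^ (β + 1) ≤ u k - u (k + 1)) : Antitone u :=
  antitone_nat_of_succ_le fun k => by
    linarith [h k, mul_nonneg hc (Real.rpow_nonneg (hu k) (β + 1))]

lemma nat_mul_le_rpow_neg_of_mul_rpow_le_sub (hu : ∀ k, 0 ≤ u k) (hc : 0 ≤ c) (hβ : 0 < β)
    (h : ∀ k, c * u k ^ (β + 1) ≤ u k - u (k + 1)) {n : ℕ} (hn : 0 < u n) :
    n * (β * c) ≤ u n ^ (-β) := by
  induction n with
  | zero => simpa using Real.rpow_nonneg (hu 0) (-β)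
  | succ n ih =>
    have hle : u (n + 1) ≤ u n := antitone_of_mul_rpow_le_sub hu hc h n.le_succ
    have hgap := rpow_neg_add_le_rpow_neg_of_mul_rpow_le_sub hβ hn hle (h n)
    push_cast
    linarith [ih (hn.trans_le hle)]

theorem exists_le_div_rpow_of_mul_rpow_le_sub (hu : ∀ k, 0 ≤ u k) (hc : 0 < c) (hβ : 0 < β)
    (h : ∀ k, c * u k ^ (β + 1) ≤ u k - u (k + 1)) :
    ∃ C > 0, ∀ n : ℕ, 1 ≤ n → u n ≤ C / (n : ℝ) ^ β⁻¹ := by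
  refine ⟨(β * c) ^ (-β⁻¹), by positivity, fun n hn => ?_⟩
  have hn' : (0 : ℝ) < n := by exact_mod_cast hn
  rcases (hu n).eq_or_lt with hzero | hpos
  · rw [← hzero]; positivity
  have hgrowth := nat_mul_le_rpow_neg_of_mul_rpow_le_sub hu hc.le hβ h hpos
  calc u n = (u n ^ (-β)) ^ (-β)⁻¹ := (Real.rpow_rpow_inv hpos.le (by linarith)).symm
    _ ≤ (n * (β * c)) ^ (-β)⁻¹ :=
      Real.rpow_le_rpow_of_nonpos (by positivity) hgrowth (by simp [hβ.le])
    _ = (β * c) ^ (-β⁻¹) / (n : ℝ) ^ β⁻¹ := by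
      rw [inv_neg, Real.mul_rpow hn'.le (by positivity), Real.rpow_neg hn'.le]
      ring

end Recursion

theorem exists_forall_le_div_rpow_of_le_div_rpow_add {v : ℕ → ℝ} {p C : ℝ} (hp : 0 ≤ p)
    (hC : 0 < C) (N : ℕ) (h : ∀ n : ℕ, 1 ≤ n → v (N + n) ≤ C / (n : ℝ) ^ p) :
    ∃ C' > 0, ∀ k : ℕ, 1 ≤ k → v k ≤ C' / (k : ℝ) ^ p := by
  obtain ⟨B, hB⟩ := ((Set.finite_Iic N).image fun k => v k * (k : ℝ) ^ p).bddAbove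
  have hCN : 0 < C * ((N : ℝ) + 1) ^ p := by positivity
  refine ⟨max (C * ((N : ℝ) + 1) ^ p) B, lt_max_of_lt_left hCN, fun k hk => ?_⟩
  have hk' : (0 : ℝ) < (k : ℝ) ^ p := by positivity
  rw [le_div_iff₀ hk']
  rcases le_or_gt k N with hkN | hNk
  · exact (hB ⟨k, hkN, rfl⟩).trans (le_max_right _ _)
  obtain ⟨n, rfl⟩ : ∃ n, k = N + n := ⟨k - N, by omega⟩
  have hn : (1 : ℝ) ≤ n := by exact_mod_cast (show 1 ≤ n by omega)
  have hsplit : ((N + n : ℕ) : ℝ) ^ p ≤ ((N : ℝ) + 1) ^ p * (n : ℝ) ^ p := by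
    rw [← Real.mul_rpow (by positivity) (by positivity)]
    gcongr
    push_cast
    nlinarith [mul_nonneg (Nat.cast_nonneg (α := ℝ) N) (sub_nonneg.mpr hn)]
  calc v (N + n) * ((N + n : ℕ) : ℝ) ^ p ≤ C / (n : ℝ) ^ p * ((N : ℝ) + 1) ^ p * (n : ℝ) ^ p := by
        rw [mul_assoc]
        exact mul_le_mul (h n (by omega)) hsplit (by positivity) (by positivity)
    _ = C * ((N : ℝ) + 1) ^ p := by field_simp
    _ ≤ _ := le_max_left _ _

section TailLength

variable {E : Type*} [SeminormedAddCommGroup E] (x : ℕ → E)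

/-- The length `e_k` of the polygonal path `x k, x (k + 1), …`. -/
noncomputable def tailLength (k : ℕ) : ℝ := ∑' j : ℕ, ‖x (k + j + 1) - x (k + j)‖

variable {x}

lemma tailLength_nonneg (k : ℕ) : 0 ≤ tailLength x k :=
  tsum_nonneg fun _ => norm_nonneg _

lemma tailLength_eq_norm_add {k : ℕ} (hs : Summable fun j : ℕ => ‖x (k + j + 1) - x (k + j)‖) :
    tailLength x k = ‖x (k + 1) - x k‖ + tailLength x (k + 1) := by
  rw [tailLength, hs.tsum_eq_zero_add, tailLength]
  simp only [add_zero, ← add_assoc, Nat.add_right_comm k _ 1]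

lemma norm_sub_le_tailLength {k : ℕ} {y : E}
    (hs : Summable fun j : ℕ => ‖x (k + j + 1) - x (k + j)‖) (hx : Tendsto x atTop (𝓝 y)) :
    ‖x k - y‖ ≤ tailLength x k := by
  have hxk : Tendsto (fun j => x (k + j)) atTop (𝓝 y) := by
    simpa only [add_comm k] using (tendsto_add_atTop_iff_nat k).mpr hx
  have hdist := dist_le_tsum_of_dist_le_of_tendsto (f := fun j => x (k + j)) _
    (fun j => (dist_comm _ _).trans_le (dist_eq_norm _ _).le) hs hxk 0
  simp only [zero_add, dist_eq_norm] at hdist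
  exact hdist

end TailLength

lemma mul_tailLength_rpow_le_sub_succ {E : Type*} [SeminormedAddCommGroup E] [NormedSpace ℝ E]
    {x : ℕ → E} {v : E} {k : ℕ} {α F a m K : ℝ} (hα : 0 < α) (hm : 0 ≤ m) (hK : 0 < K)
    (ha0 : 0 ≤ a) (ha1 : a < 1) (hF : 0 ≤ F)
    (hstep : x (k + 1) = x k - α • v) (hloj : m * F ^ a ≤ ‖v‖)
    (hs : Summable fun j : ℕ => ‖x (k + j + 1) - x (k + j)‖)
    (htail : tailLength x k ≤ K * F ^ (1 - a)) :
    α * m / K ^ (a / (1 - a)) * tailLength x k ^ (a / (1 - a)) ≤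
      tailLength x k - tailLength x (k + 1) := by
  have h1a : 0 < 1 - a := by linarith
  have hlen : α * ‖v‖ = tailLength x k - tailLength x (k + 1) := by
    rw [tailLength_eq_norm_add hs, hstep, sub_sub_cancel_left, norm_neg, norm_smul,
      Real.norm_of_nonneg hα.le]
    ring
  have hpow : (tailLength x k / K) ^ (a / (1 - a)) ≤ F ^ a :=
    calc (tailLength x k / K) ^ (a / (1 - a)) ≤ (F ^ (1 - a)) ^ (a / (1 - a)) := by
          gcongr
          · exact div_nonneg (tailLength_nonneg k) hK.le
          · rwa [div_le_iff₀' hK]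
      _ = F ^ a := by rw [← Real.rpow_mul hF]; field_simp
  calc α * m / K ^ (a / (1 - a)) * tailLength x k ^ (a / (1 - a))
      = α * m * (tailLength x k / K) ^ (a / (1 - a)) := by
        rw [Real.div_rpow (tailLength_nonneg k) hK.le]; ring
    _ ≤ α * (m * F ^ a) := by rw [← mul_assoc]; gcongr
    _ ≤ α * ‖v‖ := by gcongr
    _ = _ := hlen

theorem gradient_descent_sublinear_rate_general
    {d : ℕ} (f : EuclideanSpace ℝ (Fin d) → ℝ)
    (α : ℝ) (hα : 0 < α)
    (x : ℕ → EuclideanSpace ℝ (Fin d))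
    (hiter : ∀ k, x (k + 1) = x k - α • gradient f (x k))
    (xstar : EuclideanSpace ℝ (Fin d))
    (hconv : Tendsto x atTop (nhds xstar))
    (hfnonneg : ∀ k, 0 ≤ f (x k))
    (a m : ℝ) (ha0 : 1 / 2 < a) (ha1 : a < 1) (hm : 0 < m)
    (hloj : ∀ᶠ k in atTop, m * f (x k) ^ a ≤ ‖gradient f (x k)‖)
    (htail : ∀ᶠ k in atTop,
      Summable (fun j : ℕ => ‖x (k + j + 1) - x (k + j)‖) ∧
      (∑' j : ℕ, ‖x (k + j + 1) - x (k + j)‖) ≤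
        2 / (α * m * (1 - a)) * f (x k) ^ (1 - a)) :
    ∃ C > 0, ∀ k : ℕ, 1 ≤ k →
      ‖x k - xstar‖ ≤ C / (k : ℝ) ^ ((1 - a) / (2 * a - 1)) := by
  obtain ⟨N, hN⟩ := eventually_atTop.1 (hloj.and htail)
  have h1a : 0 < 1 - a := by linarith
  set β := (2 * a - 1) / (1 - a)
  have hβ : 0 < β := div_pos (by linarith) h1a
  have hexp : a / (1 - a) = β + 1 := by rw [div_add_one h1a.ne']; ring_nf
  have hK : 0 < 2 / (α * m * (1 - a)) := by positivity
  have hrec (n : ℕ) := mul_tailLength_rpow_le_sub_succ hα hm.le hK (by linarith) ha1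
    (hfnonneg (N + n)) (hiter (N + n)) (hN (N + n) le_self_add).1 (hN (N + n) le_self_add).2.1
    (hN (N + n) le_self_add).2.2
  rw [hexp] at hrec
  obtain ⟨C, hC, hrate⟩ := exists_le_div_rpow_of_mul_rpow_le_sub
    (u := fun n => tailLength x (N + n)) (fun n => tailLength_nonneg _) (by positivity) hβ hrec
  rw [← inv_div]
  refine exists_forall_le_div_rpow_of_le_div_rpow_add (by positivity) hC N fun n hn => ?_
  exact (norm_sub_le_tailLength (hN (N + n) le_self_add).2.1 hconv).trans (hrate n hn)

/-- Convergence rate of gradient descent under the Lojasiewicz gradient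
inequality with exponent `1/2 < a < 1`: the iterates converge to the limit `x*`
at the sublinear rate `C / k^{(1-a)/(2a-1)}`. -/
theorem gradient_descent_sublinear_rate
    {d : ℕ} (f : EuclideanSpace ℝ (Fin d) → ℝ) (hf : Differentiable ℝ f)
    (α : ℝ) (hα : 0 < α)
    (x : ℕ → EuclideanSpace ℝ (Fin d))
    (hiter : ∀ k, x (k + 1) = x k - α • gradient f (x k))
    (xstar : EuclideanSpace ℝ (Fin d))
    (hconv : Tendsto x atTop (nhds xstar))
    (hfstar : f xstar = 0)
    (hfnonneg : ∀ k, 0 ≤ f (x k))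
    (a m : ℝ) (ha0 : 1 / 2 < a) (ha1 : a < 1) (hm : 0 < m)
    (hloj : ∀ᶠ k in atTop, m * f (x k) ^ a ≤ ‖gradient f (x k)‖)
    (htail : ∀ᶠ k in atTop,
      Summable (fun j : ℕ => ‖x (k + j + 1) - x (k + j)‖) ∧
      (∑' j : ℕ, ‖x (k + j + 1) - x (k + j)‖) ≤
        2 / (α * m * (1 - a)) * f (x k) ^ (1 - a)) :
    ∃ C > 0, ∀ k : ℕ, 1 ≤ k →
      ‖x k - xstar‖ ≤ C / (k : ℝ) ^ ((1 - a) / (2 * a - 1)) :=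
  gradient_descent_sublinear_rate_general f α hα x hiter xstar hconv hfnonneg a m ha0 ha1 hm hloj
    htail
end

section
/- Let f : ℝ^d → ℝ be continuously differentiable with L-Lipschitz gradient, with compact sublevel sets {x : f(x) ≤ c} for every c, and with isolated critical points (every critical point has a neighborhood containing no other critical point). Let 0 < α < 1/L. Then for every initial point x₀, the gradient descent iterates x_k = g^k(x₀), where g(x) = x − α∇f(x), converge to a limit, and that limit is a critical point of f. -/
open Filter Function

/-! The descent lemma gives `f (g x) ≤ f x - α (1 - αL/2) ‖∇f x‖²`, so along the iterates
`f` decreases, the iterates stay in the compact sublevel set `{f ≤ f x₀}` and `∇f (x_k) → 0`.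
Hence every cluster point is critical, and consecutive iterates get arbitrarily close. Such a
sequence cannot leave a small ball around a cluster point `p` without stepping into the
surrounding annulus, and that annulus contains no cluster point when `p` is isolated among
them; once the sequence enters the ball it is therefore trapped there, so it converges to `p`. -/

open Topology Set

theorem tendsto_zero_of_sq_norm_le_sub {E : Type*} [SeminormedAddCommGroup E] {v : ℕ → E}
    {a : ℕ → ℝ} {c : ℝ} (hc : 0 < c) (ha : BddBelow (range a))
    (h : ∀ k, c * ‖v k‖ ^ 2 ≤ a k - a (k + 1)) : Tendsto v atTop (𝓝 0) := by
  have hanti : Antitone a := antitone_nat_of_succ_le fun k => by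
    linarith [h k, show 0 ≤ c * ‖v k‖ ^ 2 by positivity]
  have hlim := tendsto_atTop_ciInf hanti ha
  have hdiff : Tendsto (fun k => a k - a (k + 1)) atTop (𝓝 0) := by
    simpa using hlim.sub (hlim.comp (tendsto_add_atTop_nat 1))
  rw [tendsto_zero_iff_norm_tendsto_zero]
  refine squeeze_zero (fun _ => norm_nonneg _) (fun k => ?_)
    (by simpa using (hdiff.div_const c).sqrt)
  rw [Real.le_sqrt (norm_nonneg _) (div_nonneg (hanti k.le_succ |> sub_nonneg.2) hc.le),
    le_div_iff₀ hc, mul_comm]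
  exact h k

theorem tendsto_of_mapClusterPt_of_tendsto_dist_succ {X : Type*} [PseudoMetricSpace X]
    [ProperSpace X] {u : ℕ → X} {p : X}
    (hstep : Tendsto (fun n => dist (u (n + 1)) (u n)) atTop (𝓝 0))
    (hp : MapClusterPt p atTop u) (hiso : ∀ᶠ q in 𝓝 p, MapClusterPt q atTop u → q = p) :
    Tendsto u atTop (𝓝 p) := by
  obtain ⟨r, hr, hiso⟩ := Metric.eventually_nhds_iff.1 hiso
  rw [Metric.tendsto_nhds]
  intro ε hε
  set δ := min ε (r / 3)
  have hδ : 0 < δ := lt_min hε (by linarith)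
  have hgap : ∀ᶠ n in atTop, u n ∉ Metric.closedBall p (2 * δ) \ Metric.ball p δ := by
    by_contra! h
    obtain ⟨q, ⟨hq2δ, hqδ⟩, hq⟩ :=
      ((isCompact_closedBall p _).diff Metric.isOpen_ball).exists_mapClusterPt_of_frequently h
    rw [Metric.mem_closedBall] at hq2δ
    rw [Metric.mem_ball, hiso (by linarith [min_le_right ε (r / 3)]) hq, dist_self] at hqδ
    exact hqδ hδ
  obtain ⟨N, hN⟩ := eventually_atTop.1 (hgap.and (hstep.eventually (gt_mem_nhds hδ)))
  obtain ⟨k₀, hk₀N, hk₀⟩ := frequently_atTop.1 (hp.frequently (Metric.ball_mem_nhds p hδ)) N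
  refine eventually_atTop.2 ⟨k₀, fun k hk => lt_of_lt_of_le ?_ (min_le_left ε (r / 3))⟩
  induction k, hk using Nat.le_induction with
  | base => exact hk₀
  | succ n hn ih =>
    obtain ⟨-, hstep_n⟩ := hN n (hk₀N.trans hn)
    obtain ⟨hgap_n, -⟩ := hN (n + 1) (by omega)
    have h2δ : dist (u (n + 1)) p ≤ 2 * δ := by
      linarith [dist_triangle (u (n + 1)) (u n) p]
    by_contra! hδn
    exact hgap_n ⟨Metric.mem_closedBall.2 h2δ, fun h => (Metric.mem_ball.1 h).not_ge hδn⟩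

section GradientDescent

variable {E : Type*} [NormedAddCommGroup E] [InnerProductSpace ℝ E] [CompleteSpace E]
  {f : E → ℝ} {L α : ℝ}

theorem le_add_inner_gradient_add_sq (hf : Differentiable ℝ f)
    (hlip : ∀ x y, ‖gradient f x - gradient f y‖ ≤ L * ‖x - y‖) (x y : E) :
    f y ≤ f x + inner ℝ (gradient f x) (y - x) + L / 2 * ‖y - x‖ ^ 2 := by
  set v := y - x
  set φ : ℝ → ℝ := fun t =>
    f (x + t • v) - t * inner ℝ (gradient f x) v - L / 2 * t ^ 2 * ‖v‖ ^ 2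
  have hφ : ∀ t, HasDerivAt φ
      (inner ℝ (gradient f (x + t • v) - gradient f x) v - L * t * ‖v‖ ^ 2) t := by
    intro t
    have hline : HasDerivAt (fun s : ℝ => x + s • v) v t := by
      simpa using ((hasDerivAt_id t).smul_const v).const_add x
    have hfv := (hf (x + t • v)).hasGradientAt.hasFDerivAt.comp_hasDerivAt t hline
    refine ((hfv.sub ((hasDerivAt_id t).mul_const (inner ℝ (gradient f x) v))).sub
      (((hasDerivAt_pow 2 t).const_mul (L / 2)).mul_const (‖v‖ ^ 2))).congr_deriv ?_
    simp only [InnerProductSpace.toDual_apply_apply, inner_sub_left]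
    ring
  have hφ' : ∀ t ∈ interior (Ici (0 : ℝ)),
      inner ℝ (gradient f (x + t • v) - gradient f x) v - L * t * ‖v‖ ^ 2 ≤ 0 := by
    intro t ht
    rw [interior_Ici, mem_Ioi] at ht
    rw [sub_nonpos]
    calc inner ℝ (gradient f (x + t • v) - gradient f x) v
        ≤ ‖gradient f (x + t • v) - gradient f x‖ * ‖v‖ := real_inner_le_norm _ _
      _ ≤ L * ‖t • v‖ * ‖v‖ := by
          gcongr
          simpa using hlip (x + t • v) x
      _ = L * t * ‖v‖ ^ 2 := by rw [norm_smul, Real.norm_of_nonneg ht.le]; ring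
  have hmono := antitoneOn_of_hasDerivWithinAt_nonpos (convex_Ici 0)
    (fun t _ => (hφ t).continuousAt.continuousWithinAt)
    (fun t _ => (hφ t).hasDerivWithinAt) hφ'
  have h10 : φ 1 ≤ φ 0 := hmono self_mem_Ici (mem_Ici.2 zero_le_one) zero_le_one
  simp only [φ, v, one_smul, zero_smul, add_zero, add_sub_cancel, one_pow, mul_one, one_mul,
    zero_mul, sub_zero, zero_pow two_ne_zero, mul_zero] at h10
  linarith

noncomputable def gradientStep (f : E → ℝ) (α : ℝ) (x : E) : E := x - α • gradient f x

theorem apply_gradientStep_le (hf : Differentiable ℝ f)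
    (hlip : ∀ x y, ‖gradient f x - gradient f y‖ ≤ L * ‖x - y‖) (hα : 0 ≤ α) (x : E) :
    f (gradientStep f α x) ≤ f x - α * (1 - α * L / 2) * ‖gradient f x‖ ^ 2 := by
  have h := le_add_inner_gradient_add_sq hf hlip x (gradientStep f α x)
  rw [gradientStep] at h ⊢
  rw [sub_sub_cancel_left, inner_neg_right, real_inner_smul_right,
    real_inner_self_eq_norm_sq, norm_neg, norm_smul, Real.norm_of_nonneg hα] at h
  linarith

theorem dist_gradientStep (hα : 0 ≤ α) (x : E) :
    dist (gradientStep f α x) x = α * ‖gradient f x‖ := by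
  rw [gradientStep, dist_eq_norm, sub_sub_cancel_left, norm_neg, norm_smul,
    Real.norm_of_nonneg hα]

theorem antitone_apply_iterate_gradientStep (hf : Differentiable ℝ f)
    (hlip : ∀ x y, ‖gradient f x - gradient f y‖ ≤ L * ‖x - y‖) (hα : 0 ≤ α) (hαL : α * L ≤ 2)
    (x₀ : E) : Antitone fun k => f ((gradientStep f α)^[k] x₀) :=
  antitone_nat_of_succ_le fun k => by
    rw [iterate_succ_apply']
    have hc : 0 ≤ α * (1 - α * L / 2) := mul_nonneg hα (by linarith)
    linarith [apply_gradientStep_le hf hlip hα ((gradientStep f α)^[k] x₀),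
      mul_nonneg hc (sq_nonneg ‖gradient f ((gradientStep f α)^[k] x₀)‖)]

theorem tendsto_gradient_iterate_gradientStep (hf : Differentiable ℝ f)
    (hlip : ∀ x y, ‖gradient f x - gradient f y‖ ≤ L * ‖x - y‖) (hα : 0 < α) (hαL : α * L < 2)
    {x₀ : E} (hbdd : BddBelow (range fun k => f ((gradientStep f α)^[k] x₀))) :
    Tendsto (fun k => gradient f ((gradientStep f α)^[k] x₀)) atTop (𝓝 0) :=
  tendsto_zero_of_sq_norm_le_sub (c := α * (1 - α * L / 2)) (mul_pos hα (by linarith)) hbdd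
    fun k => by
      rw [iterate_succ_apply']
      linarith [apply_gradientStep_le hf hlip hα.le ((gradientStep f α)^[k] x₀)]

end GradientDescent

theorem gradient_descent_converges_to_critical_point_general
    {d : ℕ} (f : EuclideanSpace ℝ (Fin d) → ℝ) (L α : ℝ)
    (hf : ContDiff ℝ 1 f)
    (hlip : ∀ x y, ‖gradient f x - gradient f y‖ ≤ L * ‖x - y‖)
    (hsublevel : ∀ c : ℝ, IsCompact {x | f x ≤ c})
    (hisolated : ∀ x, gradient f x = 0 →
      ∃ U ∈ nhds x, ∀ y ∈ U, gradient f y = 0 → y = x)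
    (hα : 0 < α) (hαL : α < 1 / L)
    (g : EuclideanSpace ℝ (Fin d) → EuclideanSpace ℝ (Fin d))
    (hg : ∀ x, g x = x - α • gradient f x) :
    ∀ x₀, ∃ xstar, Tendsto (fun k => g^[k] x₀) atTop (nhds xstar) ∧
      gradient f xstar = 0 := by
  intro x₀
  obtain rfl : g = gradientStep f α := funext hg
  have hαL' : α * L < 1 := (lt_div_iff₀ (one_div_pos.1 (hα.trans hαL))).1 hαL
  have hdiff : Differentiable ℝ f := hf.differentiable one_ne_zero
  set x := fun k => (gradientStep f α)^[k] x₀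
  have hK : ∀ k, x k ∈ {z | f z ≤ f x₀} := fun k =>
    antitone_apply_iterate_gradientStep hdiff hlip hα.le (by linarith) x₀ (Nat.zero_le k)
  have hgrad : Tendsto (fun k => gradient f (x k)) atTop (𝓝 0) :=
    tendsto_gradient_iterate_gradientStep hdiff hlip hα (by linarith)
      (((hsublevel _).bddBelow_image hf.continuous.continuousOn).mono
        (range_subset_iff.2 fun k => mem_image_of_mem f (hK k)))
  have hgc : Continuous (gradient f) :=
    (LipschitzWith.of_dist_le' (K := L) fun x y => by
      simpa only [dist_eq_norm] using hlip x y).continuous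
  have hcrit : ∀ q, MapClusterPt q atTop x → gradient f q = 0 := fun q hq =>
    eq_of_nhds_neBot ((hq.continuousAt_comp hgc.continuousAt).clusterPt.mono hgrad).neBot
  obtain ⟨p, -, hp⟩ := (hsublevel (f x₀)).exists_mapClusterPt (f := atTop)
    (tendsto_principal.2 (Eventually.of_forall hK))
  obtain ⟨U, hU, hUcrit⟩ := hisolated p (hcrit p hp)
  refine ⟨p, tendsto_of_mapClusterPt_of_tendsto_dist_succ ?_ hp ?_, hcrit p hp⟩
  · simpa [x, iterate_succ_apply', dist_gradientStep hα.le] using hgrad.norm.const_mul α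
  · filter_upwards [hU] with q hqU hq using hUcrit q hqU (hcrit q hq)

/-- For a `C¹` function with `L`-Lipschitz gradient, compact sublevel sets and
isolated critical points, gradient descent with step size `0 < α < 1/L`
converges from every initialization, and the limit is a critical point. -/
theorem gradient_descent_converges_to_critical_point
    {d : ℕ} (f : EuclideanSpace ℝ (Fin d) → ℝ) (L α : ℝ)
    (hf : ContDiff ℝ 1 f) (hL : 0 < L)
    (hlip : ∀ x y, ‖gradient f x - gradient f y‖ ≤ L * ‖x - y‖)
    (hsublevel : ∀ c : ℝ, IsCompact {x | f x ≤ c})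
    (hisolated : ∀ x, gradient f x = 0 →
      ∃ U ∈ nhds x, ∀ y ∈ U, gradient f y = 0 → y = x)
    (hα : 0 < α) (hαL : α < 1 / L)
    (g : EuclideanSpace ℝ (Fin d) → EuclideanSpace ℝ (Fin d))
    (hg : ∀ x, g x = x - α • gradient f x) :
    ∀ x₀, ∃ xstar, Tendsto (fun k => g^[k] x₀) atTop (nhds xstar) ∧
      gradient f xstar = 0 :=
  gradient_descent_converges_to_critical_point_general f L α hf hlip hsublevel hisolated hα hαL g hg
end
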